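/- arXiv:0902.1189 — 2 statements merged into one kernel-verified Lean document; each statement's English description precedes it below -/
import Mathlib

section
/- Let A : X ⇉ X* be a maximal monotone linear relation, C ⊆ X nonempty closed convex with dom A ∩ int C ≠ ∅, and suppose (z,z*) is monotonically related to gra(A+N_C). If there exists y* ∈ X* such that F_A(z,y*) − ⟨z,y*⟩ + ⟨c − z, z* − y*⟩ ≤ 0 for all c ∈ C, and if z ∈ C, then (z,z*) ∈ gra(A+N_C). -/
/-!
Taking `c = z` in the hypothesis gives `F_A(z, y*) ≤ ⟨z, y*⟩`; by maximality this forces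
`(z, y*) ∈ gra A` (the equality case of the Fitzpatrick inequality). Then `F_A(z, y*) = ⟨z, y*⟩`,
and the hypothesis reduces to `⟨c - z, z* - y*⟩ ≤ 0` for all `c ∈ C`, i.e. `z* - y* ∈ N_C(z)`.
-/

section Fitzpatrick

variable {X : Type*} [NormedAddCommGroup X] [NormedSpace ℝ X]

noncomputable def fitzpatrick (G : Set (X × (X →L[ℝ] ℝ))) (p : X × (X →L[ℝ] ℝ)) : EReal :=
  sSup {r : EReal | ∃ q ∈ G, r = ((q.2 p.1 + p.2 q.1 - q.2 q.1 : ℝ) : EReal)}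

variable {G : Set (X × (X →L[ℝ] ℝ))} {p q : X × (X →L[ℝ] ℝ)}

theorem coupling_le_fitzpatrick (hq : q ∈ G) :
    ((q.2 p.1 + p.2 q.1 - q.2 q.1 : ℝ) : EReal) ≤ fitzpatrick G p :=
  le_sSup ⟨q, hq, rfl⟩

theorem coupling_add_le_of_fitzpatrick_add_le {r s : ℝ} (h : fitzpatrick G p + r ≤ s)
    (hq : q ∈ G) : q.2 p.1 + p.2 q.1 - q.2 q.1 + r ≤ s := by
  have := (add_le_add_left (coupling_le_fitzpatrick (p := p) hq) (r : EReal)).trans h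
  exact_mod_cast this

theorem mem_of_forall_coupling_le
    (hmax : ∀ p : X × (X →L[ℝ] ℝ), (∀ q ∈ G, 0 ≤ (p.2 - q.2) (p.1 - q.1)) → p ∈ G)
    (h : ∀ q ∈ G, q.2 p.1 + p.2 q.1 - q.2 q.1 ≤ p.2 p.1) : p ∈ G := by
  refine hmax p fun q hq => ?_
  have := h q hq
  simp only [sub_apply, map_sub]
  linarith

end Fitzpatrick

open Classical in
theorem stmt_12_general {X : Type*} [NormedAddCommGroup X] [NormedSpace ℝ X]
    (G : Submodule ℝ (X × (X →L[ℝ] ℝ)))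
    (hmax : ∀ p : X × (X →L[ℝ] ℝ), (∀ q ∈ G, 0 ≤ (p.2 - q.2) (p.1 - q.1)) → p ∈ G)
    (C : Set X)
    (N : X → Set (X →L[ℝ] ℝ))
    (hN : ∀ x, N x = if x ∈ C then {xstar | ∀ c ∈ C, xstar (c - x) ≤ 0} else ∅)
    (F : X × (X →L[ℝ] ℝ) → EReal)
    (hF : ∀ p, F p = sSup {r : EReal | ∃ q ∈ (G : Set (X × (X →L[ℝ] ℝ))),
      r = ((q.2 p.1 + p.2 q.1 - q.2 q.1 : ℝ) : EReal)})
    (z : X) (zstar : X →L[ℝ] ℝ)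
    (ystar : X →L[ℝ] ℝ)
    (hy : ∀ c ∈ C, F (z, ystar) + (((zstar - ystar) (c - z) - ystar z : ℝ) : EReal) ≤ 0)
    (hzC : z ∈ C) :
    ∃ astar nstar : X →L[ℝ] ℝ, (z, astar) ∈ G ∧ nstar ∈ N z ∧ zstar = astar + nstar := by
  obtain rfl : F = fitzpatrick G := funext hF
  have hcoupling : ∀ c ∈ C, ∀ q ∈ G,
      q.2 z + ystar q.1 - q.2 q.1 + ((zstar - ystar) (c - z) - ystar z) ≤ 0 :=
    fun c hc q hq => by exact_mod_cast coupling_add_le_of_fitzpatrick_add_le (hy c hc) hq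
  have hzy : (z, ystar) ∈ G := mem_of_forall_coupling_le hmax fun q hq => by
    have := hcoupling z hzC q hq
    simp only [sub_self, map_zero] at this
    dsimp only
    linarith
  refine ⟨ystar, zstar - ystar, hzy, ?_, (add_sub_cancel ystar zstar).symm⟩
  rw [hN, if_pos hzC]
  intro c hc
  have := hcoupling c hc _ hzy
  linarith

open Classical in
/-- If `(z,z*)` is monotonically related to `gra (A+N_C)`, `z ∈ C`, and there is `y*`
with `F_A(z,y*) - ⟨z,y*⟩ + ⟨c-z, z*-y*⟩ ≤ 0` for all `c ∈ C`, then
`(z,z*) ∈ gra (A + N_C)`. -/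
theorem stmt_12 {X : Type*} [NormedAddCommGroup X] [NormedSpace ℝ X] [CompleteSpace X]
    (G : Submodule ℝ (X × (X →L[ℝ] ℝ)))
    (hmono : ∀ p ∈ G, ∀ q ∈ G, 0 ≤ (p.2 - q.2) (p.1 - q.1))
    (hmax : ∀ p : X × (X →L[ℝ] ℝ), (∀ q ∈ G, 0 ≤ (p.2 - q.2) (p.1 - q.1)) → p ∈ G)
    (C : Set X) (hCne : C.Nonempty) (hCcl : IsClosed C) (hCcv : Convex ℝ C)
    (hdom : ∃ x, (∃ xstar, (x, xstar) ∈ G) ∧ x ∈ interior C)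
    (N : X → Set (X →L[ℝ] ℝ))
    (hN : ∀ x, N x = if x ∈ C then {xstar | ∀ c ∈ C, xstar (c - x) ≤ 0} else ∅)
    (F : X × (X →L[ℝ] ℝ) → EReal)
    (hF : ∀ p, F p = sSup {r : EReal | ∃ q ∈ (G : Set (X × (X →L[ℝ] ℝ))),
      r = ((q.2 p.1 + p.2 q.1 - q.2 q.1 : ℝ) : EReal)})
    (z : X) (zstar : X →L[ℝ] ℝ)
    (hrel : ∀ (y : X) (astar nstar : X →L[ℝ] ℝ), (y, astar) ∈ G → nstar ∈ N y →
      0 ≤ (zstar - (astar + nstar)) (z - y))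
    (ystar : X →L[ℝ] ℝ)
    (hy : ∀ c ∈ C, F (z, ystar) + (((zstar - ystar) (c - z) - ystar z : ℝ) : EReal) ≤ 0)
    (hzC : z ∈ C) :
    ∃ astar nstar : X →L[ℝ] ℝ, (z, astar) ∈ G ∧ nstar ∈ N z ∧ zstar = astar + nstar :=
  stmt_12_general G hmax C N hN F hF z zstar ystar hy hzC
end

section
/- Let A : X → X* be maximal monotone and at most single-valued with A linear on its domain, and let C ⊆ X be nonempty closed convex with dom A ∩ int C ≠ ∅. Then A + N_C is maximal monotone. -/
/-!
Write `G` for the graph of `A`: a linear subspace of `X × X*` on which `⟨x*, x⟩ ≥ 0`.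
Monotonicity of `A + N_C` is immediate. For maximality, let `(z, z*)` be monotonically related
to `A + N_C`.

A functional annihilating `dom A` is monotonically related to `A` at `0`, so it lies in
`A 0 = {0}`; hence `dom A` is dense. Next `z ∈ C`: otherwise pick `d ∈ dom A` close to `z`.
The segment from a point `x₀ ∈ dom A ∩ int C` to `d` stays in `dom A` and leaves `C` at a
point `y`, and a normal functional to `C` at `y` is positive on `z - y`, which contradicts
the relation of `(z, z*)` with the points `(y, A y + N_C y)`.

Finally, separate `(0, 0)` from the set `{(c - x, s) | c ∈ C, (x, x*) ∈ G, (z* - x*) (z - x) ≤ s}`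
in `X × ℝ`, which is convex since `x ↦ ⟨A x, x⟩` is a positive quadratic form and has interior
since `x₀ ∈ int C`. This gives `n` with `n (c - x) ≤ (z* - x*) (z - x)`. Taking `c = z`
shows `z* - n ∈ A z` by maximality of `A`, and then taking `x = z` shows `n ∈ N_C z`.
-/

open Metric Set ContinuousLinearMap

theorem nonpos_of_forall_nonneg_sub_mul {K x : ℝ} (h : ∀ s, 0 ≤ s → 0 ≤ K - s * x) : x ≤ 0 := by
  by_contra! hx
  have := h ((|K| + 1) / x) (by positivity)
  rw [div_mul_cancel₀ _ hx.ne'] at this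
  linarith [le_abs_self K]

def graphSubmodule {R E F : Type*} [Semiring R] [AddCommMonoid E] [AddCommMonoid F] [Module R E]
    [Module R F] (A : E → Set F) (h0 : (0 : F) ∈ A 0)
    (hadd : ∀ x y xs ys, xs ∈ A x → ys ∈ A y → xs + ys ∈ A (x + y))
    (hsmul : ∀ (c : R) x xs, xs ∈ A x → c • xs ∈ A (c • x)) : Submodule R (E × F) where
  carrier := {p | p.2 ∈ A p.1}
  zero_mem' := h0
  add_mem' hp hq := hadd _ _ _ _ hp hq
  smul_mem' c _ hp := hsmul c _ _ hp

section

variable {X : Type*} [NormedAddCommGroup X] [NormedSpace ℝ X]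

theorem ContinuousLinearMap.eq_zero_of_forall_apply_smul_lt (f : X →L[ℝ] ℝ) {x : X} {u : ℝ}
    (h : ∀ t : ℝ, f (t • x) < u) : f x = 0 := by
  by_contra hfx
  have := h ((|u| + 1) / f x)
  rw [map_smul, smul_eq_mul, div_mul_cancel₀ _ hfx] at this
  linarith [le_abs_self u]

theorem exists_forall_apply_le_of_convex {E : Set (X × ℝ)} (hE : Convex ℝ E) {K : ℝ} (hK : 0 < K)
    (hKE : ((0 : X), K) ∈ interior E)
    (h0 : ((0 : X), (0 : ℝ)) ∉ interior E) : ∃ g : X →L[ℝ] ℝ, ∀ q ∈ E, g q.1 ≤ q.2 := by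
  obtain ⟨f, hf⟩ := geometric_hahn_banach_open_point hE.interior isOpen_interior h0
  have hfE : ∀ q ∈ E, f q ≤ 0 := by
    refine fun q hq => closure_minimal (fun a ha => ?_) (isClosed_Iic.preimage f.continuous)
      (hE.closure_interior_eq_closure_of_nonempty_interior ⟨_, hKE⟩ ▸ subset_closure hq)
    simpa [show f (0, 0) = 0 from map_zero f] using (hf a ha).le
  have hsplit : ∀ q : X × ℝ, f q = f (q.1, 0) + q.2 * f (0, 1) := fun q => by
    rw [← smul_eq_mul, ← map_smul, ← map_add]
    simp
  have hα : f (0, 1) < 0 := by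
    have := hf _ hKE
    rw [hsplit] at this
    exact neg_of_mul_neg_right (by simpa using this) hK.le
  refine ⟨(-f (0, 1))⁻¹ • f.comp (inl ℝ X ℝ), fun q hq => ?_⟩
  have := hfE q hq
  rw [hsplit] at this
  rw [smul_apply, smul_eq_mul, inv_mul_le_iff₀ (by linarith)]
  simp only [comp_apply, inl_apply]
  linarith

theorem exists_mem_segment_mem_not_mem_interior {C : Set X} (hC : IsClosed C) {x₀ d : X}
    (hx₀ : x₀ ∈ C) (hd : d ∉ C) :
    ∃ y ∈ segment ℝ x₀ d, y ∈ C ∧ y ∉ interior C := by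
  by_cases hx₀' : x₀ ∈ interior C
  · by_contra! h
    have hsub : segment ℝ x₀ d ⊆ interior C ∪ Cᶜ := fun y hy => by
      by_cases hyC : y ∈ C
      · exact Or.inl (h y hy hyC)
      · exact Or.inr hyC
    have := (convex_segment x₀ d).isPreconnected.subset_left_of_subset_union isOpen_interior
      hC.isOpen_compl (disjoint_compl_right.mono_left interior_subset) hsub
      ⟨x₀, left_mem_segment ℝ x₀ d, hx₀'⟩
    exact hd (interior_subset (this (right_mem_segment ℝ x₀ d)))
  · exact ⟨x₀, left_mem_segment ℝ x₀ d, hx₀, hx₀'⟩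

open Classical in
def normalCone (C : Set X) (x : X) : Set (X →L[ℝ] ℝ) :=
  if x ∈ C then {g | ∀ c ∈ C, g (c - x) ≤ 0} else ∅

theorem mem_normalCone {C : Set X} {x : X} {g : X →L[ℝ] ℝ} :
    g ∈ normalCone C x ↔ x ∈ C ∧ ∀ c ∈ C, g (c - x) ≤ 0 := by
  unfold normalCone
  split_ifs with hx <;> simp [hx]

theorem zero_mem_normalCone {C : Set X} {x : X} (hx : x ∈ C) : 0 ∈ normalCone C x :=
  mem_normalCone.2 ⟨hx, fun _ _ => le_rfl⟩

theorem smul_mem_normalCone {C : Set X} {x : X} {g : X →L[ℝ] ℝ} (hg : g ∈ normalCone C x)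
    {s : ℝ} (hs : 0 ≤ s) : s • g ∈ normalCone C x := by
  rw [mem_normalCone] at hg ⊢
  exact ⟨hg.1, fun c hc => by simpa using mul_nonpos_of_nonneg_of_nonpos hs (hg.2 c hc)⟩

theorem add_sub_add_apply_nonneg_of_mem_normalCone {C : Set X} {x y : X}
    {a b n m : X →L[ℝ] ℝ} (hab : 0 ≤ (a - b) (x - y)) (hn : n ∈ normalCone C x)
    (hm : m ∈ normalCone C y) : 0 ≤ (a + n - (b + m)) (x - y) := by
  have hnx := (mem_normalCone.1 hn).2 y (mem_normalCone.1 hm).1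
  have hmy := (mem_normalCone.1 hm).2 x (mem_normalCone.1 hn).1
  simp only [sub_apply, add_apply, map_sub] at hab hnx hmy ⊢
  linarith

theorem exists_ne_zero_mem_normalCone {C : Set X} (hC : Convex ℝ C)
    (hint : (interior C).Nonempty) {y : X} (hyC : y ∈ C) (hy : y ∉ interior C) :
    ∃ g : X →L[ℝ] ℝ, g ≠ 0 ∧ g ∈ normalCone C y := by
  obtain ⟨g, u, hg, hgC, hgy⟩ := geometric_hahn_banach_of_nonempty_interior hC
    (convex_singleton y) (disjoint_singleton_right.2 hy) hint (singleton_nonempty y)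
  refine ⟨g, hg, mem_normalCone.2 ⟨hyC, fun c hc => ?_⟩⟩
  linarith [map_sub g c y, hgC c hc, hgy y rfl]

theorem mul_norm_le_of_mem_normalCone {C : Set X} {x₀ y : X} {r : ℝ} (hr : 0 < r)
    (hball : closedBall x₀ r ⊆ C) {g : X →L[ℝ] ℝ} (hg : g ∈ normalCone C y) :
    r * ‖g‖ ≤ g (y - x₀) := by
  have hle : ∀ w ∈ closedBall (0 : X) r, g w ≤ g (y - x₀) := fun w hw => by
    have hw' : x₀ + w ∈ C := hball (by simpa [dist_eq_norm] using hw)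
    have := (mem_normalCone.1 hg).2 _ hw'
    rw [show x₀ + w - y = w - (y - x₀) by abel, map_sub] at this
    linarith
  have hnorm : ‖g‖ ≤ g (y - x₀) / r := g.opNorm_bound_of_ball_bound hr _ fun w hw => by
    rw [Real.norm_eq_abs, abs_le]
    exact ⟨by linarith [map_neg g w, hle (-w) (by simpa using hw)], hle w hw⟩
  rwa [le_div_iff₀ hr, mul_comm] at hnorm

theorem mem_of_forall_mem_normalCone_apply_nonpos {D C : Set X} (hD : Convex ℝ D)
    (hDdense : Dense D) (hCcl : IsClosed C) (hCcv : Convex ℝ C) {x₀ : X} {r : ℝ}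
    (hx₀ : x₀ ∈ D) (hr : 0 < r) (hball : closedBall x₀ r ⊆ C) {z : X}
    (h : ∀ y ∈ D, ∀ g ∈ normalCone C y, g (z - y) ≤ 0) : z ∈ C := by
  by_contra hz
  have hx₀C : x₀ ∈ C := hball (mem_closedBall_self hr.le)
  have hx₀int : x₀ ∈ interior C :=
    interior_mono hball (by simpa [mem_interior_iff_mem_nhds] using closedBall_mem_nhds x₀ hr)
  -- for `d ∈ U` the exit point `y` of `[x₀, d]` from `C` is far enough from `d` to force
  -- `g (z - y) > 0` for the normals `g` at `y`
  set U := {d : X | ‖z - d‖ * ‖d - x₀‖ < r * infDist d C}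
  have hU : IsOpen U := isOpen_lt (by fun_prop) (continuous_const.mul (continuous_infDist_pt C))
  have hzU : z ∈ U := by
    simpa [U] using mul_pos hr ((hCcl.notMem_iff_infDist_pos ⟨x₀, hx₀C⟩).1 hz)
  obtain ⟨d, hdU, hdD⟩ := hDdense.inter_open_nonempty U hU ⟨z, hzU⟩
  have hdC : d ∉ C := fun hdC => by
    have : ‖z - d‖ * ‖d - x₀‖ < 0 := by simpa [U, infDist_zero_of_mem hdC] using hdU
    linarith [mul_nonneg (norm_nonneg (z - d)) (norm_nonneg (d - x₀))]
  obtain ⟨y, hyseg, hyC, hyint⟩ := exists_mem_segment_mem_not_mem_interior hCcl hx₀C hdC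
  obtain ⟨g, hg0, hgN⟩ := exists_ne_zero_mem_normalCone hCcv ⟨x₀, hx₀int⟩ hyC hyint
  have hgy := mul_norm_le_of_mem_normalCone hr hball hgN
  have hgzy := h y (hD.segment_subset hx₀ hdD hyseg) g hgN
  rw [segment_eq_image'] at hyseg
  obtain ⟨t, ⟨ht0, ht1⟩, rfl⟩ := hyseg
  have hgpos : 0 < ‖g‖ := norm_pos_iff.2 hg0
  have hgzd : -(‖g‖ * ‖z - d‖) ≤ g (z - d) := by
    have := g.le_opNorm (z - d)
    rw [Real.norm_eq_abs, abs_le] at this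
    linarith [this.1]
  have hdist : infDist d C ≤ (1 - t) * ‖d - x₀‖ := by
    calc infDist d C ≤ ‖d - (x₀ + t • (d - x₀))‖ := by
          simpa [dist_eq_norm] using infDist_le_dist_of_mem hyC
      _ = (1 - t) * ‖d - x₀‖ := by
          rw [show d - (x₀ + t • (d - x₀)) = (1 - t) • (d - x₀) by module, norm_smul,
            Real.norm_of_nonneg (by linarith)]
  rw [show x₀ + t • (d - x₀) - x₀ = t • (d - x₀) by abel, map_smul, smul_eq_mul] at hgy
  rw [show z - (x₀ + t • (d - x₀)) = (z - d) + (1 - t) • (d - x₀) by module, map_add,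
    map_smul, smul_eq_mul] at hgzy
  have hgdx : r * ‖g‖ ≤ g (d - x₀) :=
    hgy.trans (mul_le_of_le_one_left (pos_of_mul_pos_right ((mul_pos hr hgpos).trans_le hgy)
      ht0).le ht1)
  have hrt : (1 - t) * r ≤ ‖z - d‖ := by
    nlinarith [mul_le_mul_of_nonneg_left hgdx (by linarith : (0:ℝ) ≤ 1 - t)]
  nlinarith [mul_le_mul_of_nonneg_right hrt (norm_nonneg (d - x₀)), hdU.out]

variable {G : Submodule ℝ (X × (X →L[ℝ] ℝ))}

theorem dense_map_fst_of_maximal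
    (hmax : ∀ z zs, (∀ p ∈ G, 0 ≤ (zs - p.2) (z - p.1)) → (z, zs) ∈ G)
    (hpos : ∀ p ∈ G, 0 ≤ p.2 p.1) (hsingle : ∀ f, ((0 : X), f) ∈ G → f = 0) :
    Dense (G.map (LinearMap.fst ℝ X (X →L[ℝ] ℝ)) : Set X) := by
  set D := G.map (LinearMap.fst ℝ X (X →L[ℝ] ℝ))
  rw [Submodule.dense_iff_topologicalClosure_eq_top, Submodule.eq_top_iff']
  by_contra! ⟨v, hv⟩
  obtain ⟨f, u, hfD, hfv⟩ := geometric_hahn_banach_closed_point D.topologicalClosure.convex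
    D.isClosed_topologicalClosure hv
  have hf : ∀ x ∈ D, f x = 0 := fun x hx => f.eq_zero_of_forall_apply_smul_lt fun t =>
    hfD _ (D.le_topologicalClosure (D.smul_mem t hx))
  -- `f` annihilates the domain, so `(0, f)` is monotonically related to the graph
  have hf0 : f = 0 := hsingle f <| hmax 0 f fun p hp => by
    simpa [hf p.1 ⟨p, hp, rfl⟩] using hpos p hp
  have := hfD 0 (zero_mem _)
  simp only [hf0, zero_apply] at this hfv
  linarith

theorem apply_sub_combo_apply_sub (zs xs ys : X →L[ℝ] ℝ) (z x y : X) {a b : ℝ}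
    (hab : a + b = 1) :
    (zs - (a • xs + b • ys)) (z - (a • x + b • y)) =
      a * (zs - xs) (z - x) + b * (zs - ys) (z - y) - a * b * (xs - ys) (x - y) := by
  obtain rfl : b = 1 - a := by linarith
  simp only [sub_apply, add_apply, smul_apply, map_sub, map_add, map_smul, smul_eq_mul]
  ring

theorem convex_sub_graph_epigraph (hpos : ∀ p ∈ G, 0 ≤ p.2 p.1) {C : Set X} (hC : Convex ℝ C)
    (z : X) (zs : X →L[ℝ] ℝ) :
    Convex ℝ {q : X × ℝ | ∃ c ∈ C, ∃ p ∈ G, q.1 = c - p.1 ∧ (zs - p.2) (z - p.1) ≤ q.2} := by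
  rintro _ ⟨c, hc, p, hp, hq1, hqs⟩ _ ⟨c', hc', p', hp', hq1', hqs'⟩ a b ha hb hab
  refine ⟨a • c + b • c', hC hc hc' ha hb hab, a • p + b • p',
    G.add_mem (G.smul_mem a hp) (G.smul_mem b hp'), ?_, ?_⟩
  · simp only [Prod.fst_add, Prod.smul_fst, hq1, hq1']
    module
  · have hmono := hpos _ (G.sub_mem hp hp')
    simp only [Prod.fst_add, Prod.snd_add, Prod.smul_fst, Prod.smul_snd, Prod.fst_sub,
      Prod.snd_sub, smul_eq_mul, apply_sub_combo_apply_sub _ _ _ _ _ _ hab] at hmono ⊢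
    nlinarith [mul_nonneg ha hb, mul_le_mul_of_nonneg_left hqs ha,
      mul_le_mul_of_nonneg_left hqs' hb]

theorem exists_forall_apply_sub_le_of_forall_nonneg (hpos : ∀ p ∈ G, 0 ≤ p.2 p.1)
    {C : Set X} (hC : Convex ℝ C) {p₀ : X × (X →L[ℝ] ℝ)} (hp₀ : p₀ ∈ G) {r : ℝ} (hr : 0 < r)
    (hball : closedBall p₀.1 r ⊆ C) {z : X} {zs : X →L[ℝ] ℝ}
    (h : ∀ p ∈ G, p.1 ∈ C → 0 ≤ (zs - p.2) (z - p.1)) :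
    ∃ n : X →L[ℝ] ℝ, ∀ c ∈ C, ∀ p ∈ G, n (c - p.1) ≤ (zs - p.2) (z - p.1) := by
  set E := {q : X × ℝ | ∃ c ∈ C, ∃ p ∈ G, q.1 = c - p.1 ∧ (zs - p.2) (z - p.1) ≤ q.2}
  set K := max ((zs - p₀.2) (z - p₀.1)) 0 + 1
  have hKE : ((0 : X), K) ∈ interior E := by
    refine interior_maximal (t := ball 0 r ×ˢ Ioi (K - 1)) (fun q hq => ?_)
      (isOpen_ball.prod isOpen_Ioi) ⟨mem_ball_self hr, sub_one_lt K⟩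
    refine ⟨p₀.1 + q.1, hball ?_, p₀, hp₀, by abel, ?_⟩
    · simpa [dist_eq_norm] using (mem_ball_zero_iff.1 hq.1).le
    · exact (le_max_left _ _).trans (by simpa [K] using (mem_Ioi.1 hq.2).le)
  have h0 : ((0 : X), (0 : ℝ)) ∉ interior E := fun h0 => by
    have hev : ∀ᶠ s : ℝ in nhds 0, ((0 : X), s) ∈ E :=
      (continuous_const.prodMk continuous_id).continuousAt.preimage_mem_nhds
        (mem_interior_iff_mem_nhds.1 h0)
    obtain ⟨s, ⟨c, hc, p, hp, hcp, hps⟩, hs⟩ :=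
      ((hev.filter_mono nhdsWithin_le_nhds).and (self_mem_nhdsWithin (s := Iio 0))).exists
    obtain rfl : c = p.1 := sub_eq_zero.1 hcp.symm
    linarith [h p hp hc]
  obtain ⟨g, hg⟩ := exists_forall_apply_le_of_convex (convex_sub_graph_epigraph hpos hC z zs)
    (by positivity) hKE h0
  exact ⟨g, fun c hc p hp => hg (c - p.1, _) ⟨c, hc, p, hp, rfl, le_rfl⟩⟩

end

open Classical in
theorem stmt_14_general {X : Type*} [NormedAddCommGroup X] [NormedSpace ℝ X]
    (A : X → Set (X →L[ℝ] ℝ))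
    (hsingle : ∀ x xstar ystar, xstar ∈ A x → ystar ∈ A x → xstar = ystar)
    (hadd : ∀ x y xstar ystar, xstar ∈ A x → ystar ∈ A y → xstar + ystar ∈ A (x + y))
    (hsmul : ∀ (c : ℝ) x xstar, xstar ∈ A x → c • xstar ∈ A (c • x))
    (hmono : ∀ x y xstar ystar, xstar ∈ A x → ystar ∈ A y →
      0 ≤ (xstar - ystar) (x - y))
    (hmax : ∀ (z : X) (zstar : X →L[ℝ] ℝ),
      (∀ x xstar, xstar ∈ A x → 0 ≤ (zstar - xstar) (z - x)) → zstar ∈ A z)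
    (C : Set X) (hCcl : IsClosed C) (hCcv : Convex ℝ C)
    (hdom : ∃ x, (A x).Nonempty ∧ x ∈ interior C)
    (N : X → Set (X →L[ℝ] ℝ))
    (hN : ∀ x, N x = if x ∈ C then {xstar | ∀ c ∈ C, xstar (c - x) ≤ 0} else ∅)
    (S : Set (X × (X →L[ℝ] ℝ)))
    (hS : S = {p | ∃ astar nstar : X →L[ℝ] ℝ,
      astar ∈ A p.1 ∧ nstar ∈ N p.1 ∧ p.2 = astar + nstar}) :
    (∀ p ∈ S, ∀ q ∈ S, 0 ≤ (p.2 - q.2) (p.1 - q.1)) ∧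
    (∀ p : X × (X →L[ℝ] ℝ), (∀ q ∈ S, 0 ≤ (p.2 - q.2) (p.1 - q.1)) → p ∈ S) := by
  obtain rfl : N = normalCone C := funext hN
  subst hS
  obtain ⟨x₀, ⟨a₀, ha₀⟩, hx₀⟩ := hdom
  obtain ⟨r, hr, hball⟩ := nhds_basis_closedBall.mem_iff.1 (mem_interior_iff_mem_nhds.1 hx₀)
  have h0 : (0 : X →L[ℝ] ℝ) ∈ A 0 := by simpa using hsmul 0 x₀ a₀ ha₀
  set G := graphSubmodule A h0 hadd hsmul
  have hpos : ∀ p ∈ G, 0 ≤ p.2 p.1 := fun p hp => by simpa using hmono _ _ _ _ hp h0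
  have hmaxG : ∀ z zs, (∀ p ∈ G, 0 ≤ (zs - p.2) (z - p.1)) → (z, zs) ∈ G :=
    fun z zs h => hmax z zs fun x xs hx => h (x, xs) hx
  refine ⟨?_, fun ⟨z, zs⟩ hrel => ?_⟩
  · rintro _ ⟨a, n, ha, hn, hp⟩ _ ⟨b, m, hb, hm, hq⟩
    rw [hp, hq]
    exact add_sub_add_apply_nonneg_of_mem_normalCone (hmono _ _ _ _ ha hb) hn hm
  have hrelA : ∀ p ∈ G, p.1 ∈ C → 0 ≤ (zs - p.2) (z - p.1) := fun p hp hpC => by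
    simpa using hrel (p.1, p.2 + 0) ⟨p.2, 0, hp, zero_mem_normalCone hpC, rfl⟩
  have hrelN : ∀ y ∈ G.map (LinearMap.fst ℝ X _), ∀ g ∈ normalCone C y, g (z - y) ≤ 0 := by
    rintro _ ⟨p, hp, rfl⟩ g hg
    refine nonpos_of_forall_nonneg_sub_mul (K := (zs - p.2) (z - p.1)) fun s hs => ?_
    have := hrel (p.1, p.2 + s • g) ⟨p.2, s • g, hp, smul_mem_normalCone hg hs, rfl⟩
    simp only [sub_apply, add_apply, smul_apply, smul_eq_mul, map_sub, LinearMap.fst_apply]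
      at this ⊢
    linarith
  have hz : z ∈ C := mem_of_forall_mem_normalCone_apply_nonpos (Submodule.convex _)
    (dense_map_fst_of_maximal hmaxG hpos fun f hf => hsingle 0 f 0 hf h0) hCcl hCcv
    ⟨(x₀, a₀), ha₀, rfl⟩ hr hball hrelN
  obtain ⟨n, hn⟩ := exists_forall_apply_sub_le_of_forall_nonneg hpos hCcv (p₀ := (x₀, a₀)) ha₀
    hr hball hrelA
  have hzn : (z, zs - n) ∈ G := hmaxG z (zs - n) fun p hp => by
    have := hn z hz p hp
    simp only [sub_apply, map_sub] at this ⊢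
    linarith
  exact ⟨zs - n, n, hzn, mem_normalCone.2 ⟨hz, fun c hc => by simpa using hn c hc _ hzn⟩,
    (sub_add_cancel zs n).symm⟩

open Classical in
/-- Corollary: if `A` is maximal monotone, at most single-valued, and linear on its
domain, and `C` is nonempty closed convex with `dom A ∩ int C ≠ ∅`, then `A + N_C`
is maximal monotone. -/
theorem stmt_14 {X : Type*} [NormedAddCommGroup X] [NormedSpace ℝ X] [CompleteSpace X]
    (A : X → Set (X →L[ℝ] ℝ))
    (hsingle : ∀ x xstar ystar, xstar ∈ A x → ystar ∈ A x → xstar = ystar)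
    (hadd : ∀ x y xstar ystar, xstar ∈ A x → ystar ∈ A y → xstar + ystar ∈ A (x + y))
    (hsmul : ∀ (c : ℝ) x xstar, xstar ∈ A x → c • xstar ∈ A (c • x))
    (hmono : ∀ x y xstar ystar, xstar ∈ A x → ystar ∈ A y →
      0 ≤ (xstar - ystar) (x - y))
    (hmax : ∀ (z : X) (zstar : X →L[ℝ] ℝ),
      (∀ x xstar, xstar ∈ A x → 0 ≤ (zstar - xstar) (z - x)) → zstar ∈ A z)
    (C : Set X) (hCne : C.Nonempty) (hCcl : IsClosed C) (hCcv : Convex ℝ C)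
    (hdom : ∃ x, (A x).Nonempty ∧ x ∈ interior C)
    (N : X → Set (X →L[ℝ] ℝ))
    (hN : ∀ x, N x = if x ∈ C then {xstar | ∀ c ∈ C, xstar (c - x) ≤ 0} else ∅)
    (S : Set (X × (X →L[ℝ] ℝ)))
    (hS : S = {p | ∃ astar nstar : X →L[ℝ] ℝ,
      astar ∈ A p.1 ∧ nstar ∈ N p.1 ∧ p.2 = astar + nstar}) :
    (∀ p ∈ S, ∀ q ∈ S, 0 ≤ (p.2 - q.2) (p.1 - q.1)) ∧
    (∀ p : X × (X →L[ℝ] ℝ), (∀ q ∈ S, 0 ≤ (p.2 - q.2) (p.1 - q.1)) → p ∈ S) :=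
  stmt_14_general A hsingle hadd hsmul hmono hmax C hCcl hCcv hdom N hN S hS
end
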